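/- Let (β_n) be a sequence of locally integrable real-valued functions on ℝ with β_n ⇀ 0 and |β_n(t)| ≤ β̄(t) for a.e. t and all n, where β̄ is locally integrable. Let H be a Hilbert space and v ∈ C([0,T], H). Define V_n(t) = ∫_0^t β_n(t') v(t') dt' (Bochner integral). Then each V_n belongs to C([0,T], H) and lim_{n→∞} max_{t ∈ [0,T]} ‖V_n(t)‖ = 0. -/

import Mathlib

/-!
The primitives `Vₙ(t) = ∫₀ᵗ βₙ v` share the modulus of continuity `‖Vₙ y - Vₙ x‖ ≤ M |∫ₓʸ β̄|`
with `M = sup ‖v‖`, so they are equicontinuous on `[0, T]`, and on a compact set equicontinuity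
upgrades pointwise convergence to uniform convergence. For pointwise convergence at `s`, freeze `v`
on a fine partition `(pₖ)` of `[0, s]`: the frozen sum `∑ₖ (∫_{pₖ}^{pₖ₊₁} βₙ) • v pₖ` tends to `0`
by weak convergence against constants, and by domination it differs from `Vₙ s` by at most
`osc(v) · ∫₀ˢ β̄`, which uniform continuity of `v` makes small.
-/

open MeasureTheory Filter Set Topology

section Equicontinuity

variable {ι X α : Type*} [TopologicalSpace X]

theorem equicontinuousOn_of_dist_le_dist {β : Type*} [PseudoMetricSpace α] [PseudoMetricSpace β]
    {F : ι → X → α} {g : X → β} {S : Set X} (hg : ContinuousOn g S)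
    (hF : ∀ i, ∀ x ∈ S, ∀ y ∈ S, dist (F i x) (F i y) ≤ dist (g x) (g y)) :
    EquicontinuousOn F S := by
  intro x₀ hx₀ U hU
  obtain ⟨ε, hε, hεU⟩ := Metric.mem_uniformity_dist.mp hU
  filter_upwards [self_mem_nhdsWithin, hg x₀ hx₀ (Metric.ball_mem_nhds _ hε)] with x hx hgx i
  exact hεU ((hF i x₀ hx₀ x hx).trans_lt (by rw [dist_comm]; exact hgx))

theorem EquicontinuousOn.tendstoUniformlyOn_of_tendsto [UniformSpace α] {F : ι → X → α}
    {f : X → α} {K : Set X} {l : Filter ι} (hK : IsCompact K) (hF : EquicontinuousOn F K)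
    (h : ∀ x ∈ K, Tendsto (F · x) l (𝓝 (f x))) : TendstoUniformlyOn F f l K := by
  have hunif := (EquicontinuousOn.tendsto_uniformOnFun_iff_pi' (𝔖 := {K}) (by simpa using hK)
    (by simpa using hF) l f).2 (by
      rw [sUnion_singleton, tendsto_pi_nhds]
      exact fun x => h x x.2)
  exact UniformOnFun.tendsto_iff_tendstoUniformlyOn.1 hunif K rfl

end Equicontinuity

theorem tendsto_zero_of_forall_approx {ι E : Type*} [SeminormedAddCommGroup E] {l : Filter ι}
    {x : ι → E} (h : ∀ ε > 0, ∃ y : ι → E, Tendsto y l (𝓝 0) ∧ ∀ i, ‖x i - y i‖ ≤ ε) :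
    Tendsto x l (𝓝 0) := by
  refine Metric.tendsto_nhds.2 fun ε hε => ?_
  obtain ⟨y, hy, hxy⟩ := h (ε / 2) (half_pos hε)
  filter_upwards [Metric.tendsto_nhds.1 hy (ε / 2) (half_pos hε)] with i hi
  rw [dist_zero_right] at hi ⊢
  calc ‖x i‖ ≤ ‖x i - y i‖ + ‖y i‖ := norm_le_norm_sub_add _ _
    _ < ε := by linarith [hxy i]

theorem exists_partition_of_mesh_le {a b δ : ℝ} (hab : a ≤ b) (hδ : 0 < δ) :
    ∃ (N : ℕ) (p : ℕ → ℝ), Monotone p ∧ p 0 = a ∧ p N = b ∧ ∀ k, p (k + 1) - p k ≤ δ := by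
  obtain ⟨N, hN⟩ := exists_nat_gt ((b - a) / δ)
  have hN0 : (0 : ℝ) < N := (div_nonneg (sub_nonneg.2 hab) hδ.le).trans_lt hN
  have hstep : 0 ≤ (b - a) / N := div_nonneg (sub_nonneg.2 hab) hN0.le
  refine ⟨N, fun k => a + k * ((b - a) / N), fun j k hjk => by simp only; gcongr, by simp,
    by field_simp; ring, fun k => ?_⟩
  rw [div_lt_iff₀ hδ] at hN
  calc a + ((k + 1 : ℕ) : ℝ) * ((b - a) / N) - (a + k * ((b - a) / N)) = (b - a) / N := by
        push_cast; ring
    _ ≤ δ := by rw [div_le_iff₀ hN0]; linarith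

section Primitive

variable {E : Type*} [NormedAddCommGroup E] [NormedSpace ℝ E]

theorem equicontinuousOn_primitive_of_norm_le {ι : Type*} {f : ι → ℝ → E} {g : ℝ → ℝ} {a b : ℝ}
    (hf : ∀ i, IntegrableOn (f i) (Icc a b)) (hg : IntegrableOn g (Icc a b))
    (hfg : ∀ i, ∀ᵐ t ∂volume.restrict (Icc a b), ‖f i t‖ ≤ g t) :
    EquicontinuousOn (fun i x => ∫ t in a..x, f i t) (Icc a b) := by
  have hG : ContinuousOn (fun x => ∫ t in a..x, g t) (Icc a b) := fun x hx => by
    have hab : a ≤ b := hx.1.trans hx.2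
    exact (intervalIntegral.continuousOn_primitive_interval (by rwa [uIcc_of_le hab])).mono
      Icc_subset_uIcc x hx
  refine equicontinuousOn_of_dist_le_dist hG fun i x hx y hy => ?_
  have hleft : ∀ {c}, c ∈ Icc a b → uIcc a c ⊆ Icc a b := fun hc =>
    uIcc_subset_Icc (left_mem_Icc.2 (hc.1.trans hc.2)) hc
  rw [dist_eq_norm, dist_eq_norm,
    intervalIntegral.integral_interval_sub_left ((hf i).mono_set (hleft hx)).intervalIntegrable
      ((hf i).mono_set (hleft hy)).intervalIntegrable,
    intervalIntegral.integral_interval_sub_left (hg.mono_set (hleft hx)).intervalIntegrable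
      (hg.mono_set (hleft hy)).intervalIntegrable]
  exact intervalIntegral.norm_integral_le_abs_of_norm_le
    (ae_restrict_of_ae_restrict_of_subset (uIoc_subset_uIcc.trans (uIcc_subset_Icc hy hx)) (hfg i))
    (hg.mono_set (uIcc_subset_Icc hy hx)).intervalIntegrable

variable [CompleteSpace E]

theorem norm_intervalIntegral_smul_sub_smul_le {β βbar : ℝ → ℝ} {v : ℝ → E} {x y ε : ℝ}
    (hxy : x ≤ y) (hβ : IntervalIntegrable β volume x y) (hβbar : IntervalIntegrable βbar volume x y)
    (hdom : ∀ᵐ t, |β t| ≤ βbar t) (hv : ContinuousOn v (Icc x y))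
    (hε : ∀ t ∈ Icc x y, ‖v t - v x‖ ≤ ε) :
    ‖(∫ t in x..y, β t • v t) - (∫ t in x..y, β t) • v x‖ ≤ ε * ∫ t in x..y, βbar t := by
  rw [← intervalIntegral.integral_smul_const, ← intervalIntegral.integral_sub
    (hβ.smul_continuousOn (by rwa [uIcc_of_le hxy])) (hβ.smul_continuousOn continuousOn_const),
    ← intervalIntegral.integral_const_mul]
  refine intervalIntegral.norm_integral_le_of_norm_le hxy ?_ (hβbar.const_mul ε)
  filter_upwards [hdom] with t ht htI
  rw [← smul_sub, norm_smul, mul_comm ε, Real.norm_eq_abs]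
  exact mul_le_mul ht (hε t (Ioc_subset_Icc_self htI)) (norm_nonneg _) ((abs_nonneg _).trans ht)

theorem norm_intervalIntegral_smul_sub_sum_le {β βbar : ℝ → ℝ} {v : ℝ → E} {ε : ℝ} {p : ℕ → ℝ}
    {N : ℕ} (hp : Monotone p) (hβ : IntervalIntegrable β volume (p 0) (p N))
    (hβbar : IntervalIntegrable βbar volume (p 0) (p N)) (hdom : ∀ᵐ t, |β t| ≤ βbar t)
    (hv : ContinuousOn v (Icc (p 0) (p N)))
    (hε : ∀ k < N, ∀ t ∈ Icc (p k) (p (k + 1)), ‖v t - v (p k)‖ ≤ ε) :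
    ‖(∫ t in p 0..p N, β t • v t) - ∑ k ∈ Finset.range N, (∫ t in p k..p (k + 1), β t) • v (p k)‖
      ≤ ε * ∫ t in p 0..p N, βbar t := by
  have hpiece : ∀ k < N, Icc (p k) (p (k + 1)) ⊆ Icc (p 0) (p N) := fun k hk =>
    Icc_subset_Icc (hp (Nat.zero_le k)) (hp hk)
  have huIcc : ∀ k < N, uIcc (p k) (p (k + 1)) ⊆ uIcc (p 0) (p N) := fun k hk => by
    rw [uIcc_of_le (hp (Nat.le_succ k)), uIcc_of_le (hp (Nat.zero_le N))]
    exact hpiece k hk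
  have hβv : IntervalIntegrable (fun t => β t • v t) volume (p 0) (p N) :=
    hβ.smul_continuousOn (by rwa [uIcc_of_le (hp (Nat.zero_le N))])
  rw [← intervalIntegral.sum_integral_adjacent_intervals fun k hk => hβv.mono_set (huIcc k hk),
    ← intervalIntegral.sum_integral_adjacent_intervals fun k hk => hβbar.mono_set (huIcc k hk),
    Finset.mul_sum, ← Finset.sum_sub_distrib]
  refine (norm_sum_le _ _).trans (Finset.sum_le_sum fun k hk => ?_)
  have hk : k < N := Finset.mem_range.1 hk
  exact norm_intervalIntegral_smul_sub_smul_le (hp (Nat.le_succ k)) (hβ.mono_set (huIcc k hk))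
    (hβbar.mono_set (huIcc k hk)) hdom (hv.mono (hpiece k hk)) (hε k hk)

theorem tendsto_intervalIntegral_smul_of_tendsto_intervalIntegral {ι : Type*} {l : Filter ι}
    {β : ι → ℝ → ℝ} {βbar : ℝ → ℝ} {v : ℝ → E} {a b : ℝ} (hab : a ≤ b)
    (hβ : ∀ i, IntervalIntegrable (β i) volume a b) (hβbar : IntervalIntegrable βbar volume a b)
    (hdom : ∀ i, ∀ᵐ t, |β i t| ≤ βbar t)
    (hlim : ∀ c ∈ Icc a b, ∀ d ∈ Icc c b, Tendsto (fun i => ∫ t in c..d, β i t) l (𝓝 0))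
    (hv : ContinuousOn v (Icc a b)) :
    Tendsto (fun i => ∫ t in a..b, β i t • v t) l (𝓝 0) := by
  refine tendsto_zero_of_forall_approx fun ε hε => ?_
  set C := |∫ t in a..b, βbar t| + 1
  have hC : 0 < C := by positivity
  obtain ⟨δ, hδ, hvδ⟩ := Metric.uniformContinuousOn_iff_le.1
    (isCompact_Icc.uniformContinuousOn_of_continuous hv) (ε / C) (div_pos hε hC)
  obtain ⟨N, p, hp, rfl, rfl, hmesh⟩ := exists_partition_of_mesh_le hab hδ
  have hpmem : ∀ k ≤ N, p k ∈ Icc (p 0) (p N) := fun k hk => ⟨hp (Nat.zero_le k), hp hk⟩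
  refine ⟨fun i => ∑ k ∈ Finset.range N, (∫ t in p k..p (k + 1), β i t) • v (p k), ?_, fun i => ?_⟩
  · have := tendsto_finsetSum (Finset.range N) fun k hk =>
      (hlim (p k) (hpmem k (Finset.mem_range.1 hk).le) (p (k + 1))
        ⟨hp (Nat.le_succ k), (hpmem (k + 1) (Finset.mem_range.1 hk)).2⟩).smul_const (v (p k))
    simpa using this
  · have hosc : ∀ k < N, ∀ t ∈ Icc (p k) (p (k + 1)), ‖v t - v (p k)‖ ≤ ε / C := by
      intro k hk t ht
      rw [← dist_eq_norm]
      refine hvδ t ⟨(hpmem k hk.le).1.trans ht.1, ht.2.trans (hpmem (k + 1) hk).2⟩ (p k)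
        (hpmem k hk.le) ?_
      rw [Real.dist_eq, abs_of_nonneg (sub_nonneg.2 ht.1)]
      linarith [ht.2, hmesh k]
    calc _ ≤ ε / C * ∫ t in p 0..p N, βbar t :=
          norm_intervalIntegral_smul_sub_sum_le hp (hβ i) hβbar (hdom i) hv hosc
      _ ≤ ε / C * C := by gcongr; exact (le_abs_self _).trans (le_add_of_nonneg_right zero_le_one)
      _ = ε := div_mul_cancel₀ ε hC.ne'

end Primitive

theorem stmt4_general {H : Type*} [NormedAddCommGroup H] [InnerProductSpace ℂ H] [CompleteSpace H]
    {T : ℝ}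
    (βs : ℕ → ℝ → ℝ) (βbar : ℝ → ℝ)
    (hβs : ∀ n, LocallyIntegrable (βs n) volume)
    (hβbar : LocallyIntegrable βbar volume)
    (hweak : ∀ a b : ℝ, ∀ θ : ℝ → ℝ, ContinuousOn θ (Icc a b) →
      Tendsto (fun n => ∫ t in Icc a b, βs n t * θ t) atTop (nhds 0))
    (hdom : ∀ n, ∀ᵐ t ∂volume, |βs n t| ≤ βbar t)
    (v : ℝ → H) (hv : ContinuousOn v (Icc 0 T)) :
    (∀ n, ContinuousOn (fun t => ∫ t' in (0:ℝ)..t, βs n t' • v t') (Icc 0 T)) ∧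
    TendstoUniformlyOn (fun n t => ∫ t' in (0:ℝ)..t, βs n t' • v t')
      (fun _ => (0 : H)) atTop (Icc 0 T) := by
  have hβsI : ∀ n (x y : ℝ), IntervalIntegrable (βs n) volume x y := fun n x y =>
    ((hβs n).integrableOn_isCompact isCompact_uIcc).intervalIntegrable
  have hβbarI : ∀ x y : ℝ, IntervalIntegrable βbar volume x y := fun x y =>
    (hβbar.integrableOn_isCompact isCompact_uIcc).intervalIntegrable
  have hlim : ∀ c d : ℝ, c ≤ d → Tendsto (fun n => ∫ t in c..d, βs n t) atTop (𝓝 0) :=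
    fun c d hcd => by
      simpa [intervalIntegral.integral_of_le hcd, integral_Icc_eq_integral_Ioc] using
        hweak c d (fun _ => 1) continuousOn_const
  obtain ⟨M, hM⟩ := isCompact_Icc.exists_bound_of_continuousOn hv
  have hequi : EquicontinuousOn (fun n t => ∫ t' in (0:ℝ)..t, βs n t' • v t') (Icc 0 T) := by
    refine equicontinuousOn_primitive_of_norm_le (g := fun t => βbar t * M)
      (fun n => ((hβs n).integrableOn_isCompact isCompact_Icc).smul_continuousOn hv isCompact_Icc)
      ((hβbar.integrableOn_isCompact isCompact_Icc).mul_const M) fun n => ?_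
    filter_upwards [ae_restrict_mem measurableSet_Icc, ae_restrict_of_ae (hdom n)] with t ht hd
    rw [norm_smul, Real.norm_eq_abs]
    exact mul_le_mul hd (hM t ht) (norm_nonneg _) ((abs_nonneg _).trans hd)
  refine ⟨hequi.continuousOn, hequi.tendstoUniformlyOn_of_tendsto isCompact_Icc fun s hs => ?_⟩
  exact tendsto_intervalIntegral_smul_of_tendsto_intervalIntegral hs.1 (fun n => hβsI n 0 s)
    (hβbarI 0 s) hdom (fun c _ d hd => hlim c d hd.1) (hv.mono (Icc_subset_Icc_right hs.2))

/-- If `βs n ⇀ 0` weakly with `|βs n| ≤ β̄` a.e. for a locally integrable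
`β̄`, and `v ∈ C([0,T], H)`, then `Vₙ(t) = ∫_0^t βs n (t') v(t') dt'` belongs to
`C([0,T], H)` and `max_{t ∈ [0,T]} ‖Vₙ(t)‖ → 0`. -/
theorem stmt4 {H : Type*} [NormedAddCommGroup H] [InnerProductSpace ℂ H] [CompleteSpace H]
    {T : ℝ} (hT : 0 < T)
    (βs : ℕ → ℝ → ℝ) (βbar : ℝ → ℝ)
    (hβs : ∀ n, LocallyIntegrable (βs n) volume)
    (hβbar : LocallyIntegrable βbar volume)
    (hweak : ∀ a b : ℝ, ∀ θ : ℝ → ℝ, ContinuousOn θ (Icc a b) →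
      Tendsto (fun n => ∫ t in Icc a b, βs n t * θ t) atTop (nhds 0))
    (hdom : ∀ n, ∀ᵐ t ∂volume, |βs n t| ≤ βbar t)
    (v : ℝ → H) (hv : ContinuousOn v (Icc 0 T)) :
    (∀ n, ContinuousOn (fun t => ∫ t' in (0:ℝ)..t, βs n t' • v t') (Icc 0 T)) ∧
    TendstoUniformlyOn (fun n t => ∫ t' in (0:ℝ)..t, βs n t' • v t')
      (fun _ => (0 : H)) atTop (Icc 0 T) :=
  stmt4_general βs βbar hβs hβbar hweak hdom v hv
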